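/- arXiv:math-ph/0703013 — 4 statements merged into one kernel-verified Lean document; each statement's English description precedes it below -/
import Mathlib

section
/- Let S₁,…,S_d and T₁,…,T_d be two families of isometries on Hilbert spaces satisfying the Cuntz relations S_k* S_l = δ_{kl} 1 and ∑_k S_k S_k* = 1 (and similarly for T). Then in the tensor product, the operator V = ∑_{j=1}^d S_j* ⊗ T_j is a unitary: V V* = V* V = 1. -/
/-!
Writing `V = ∑ j, S j* ⊗ T j`, the relations `T j* T k = δ_jk` make the cross terms of
`⟪V (x ⊗ y), V (x' ⊗ y')⟫` vanish, and `∑ j, S j S j* = 1` collapses the remaining sum to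
`⟪x, x'⟫ ⟪y, y'⟫`, so `V* V = 1` by density of the elementary tensors. Dually,
`x ⊗ y = V (∑ j, S j x ⊗ T j* y)` by the other two relations, so `V` maps onto a dense set of
vectors on which `V V* = 1` follows from `V* V = 1`.
-/

section

open ContinuousLinearMap

variable {E : Type*} [NormedAddCommGroup E] [InnerProductSpace ℂ E]

theorem eq_of_inner_left_of_dense_span {s : Set E} (hs : Dense (Submodule.span ℂ s : Set E))
    {x y : E} (h : ∀ v ∈ s, inner ℂ x v = inner ℂ y v) : x = y :=
  innerSL_inj.mp <| ext_on hs (f := innerSL ℂ x) (g := innerSL ℂ y) h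

variable [CompleteSpace E]

namespace ContinuousLinearMap

variable {s : Set E} (hs : Dense (Submodule.span ℂ s : Set E)) {V : E →L[ℂ] E}
include hs

theorem star_mul_self_eq_one_of_inner_map_map
    (h : ∀ u ∈ s, ∀ w ∈ s, inner ℂ (V u) (V w) = inner ℂ u w) : star V * V = 1 :=
  ext_on hs fun u hu => eq_of_inner_left_of_dense_span hs fun w hw => by
    rw [mul_apply_eq_comp, star_eq_adjoint, adjoint_inner_left, one_apply_eq_self, h u hu w hw]

theorem self_mul_star_eq_one_of_star_mul_self_eq_one (h : star V * V = 1)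
    (hrange : s ⊆ Set.range V) : V * star V = 1 :=
  ext_on hs fun u hu => by
    obtain ⟨w, rfl⟩ := hrange hu
    rw [mul_apply_eq_comp, ← mul_apply_eq_comp (star V), h, one_apply_eq_self,
      one_apply_eq_self]

end ContinuousLinearMap

section CuntzRelations

variable {n : Type*} {S : n → E →L[ℂ] E}

theorem star_apply_apply_eq_ite [DecidableEq n]
    (hS : ∀ i j, star (S i) * S j = if i = j then 1 else 0)
    (i j : n) (x : E) : star (S i) (S j x) = if i = j then x else 0 := by
  rw [← mul_apply_eq_comp, hS]
  split_ifs <;> rfl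

theorem inner_apply_apply_eq_ite [DecidableEq n]
    (hS : ∀ i j, star (S i) * S j = if i = j then 1 else 0)
    (i j : n) (x y : E) : inner ℂ (S i x) (S j y) = if i = j then inner ℂ x y else 0 := by
  rw [← adjoint_inner_right, ← star_eq_adjoint, star_apply_apply_eq_ite hS]
  split_ifs <;> simp

theorem sum_apply_star_apply [Fintype n] (hS : ∑ j, S j * star (S j) = 1) (x : E) :
    ∑ j, S j (star (S j) x) = x := by
  simp_rw [← mul_apply_eq_comp, ← sum_apply, hS, one_apply_eq_self]

theorem sum_inner_star_apply_star_apply [Fintype n] (hS : ∑ j, S j * star (S j) = 1) (x x' : E) :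
    ∑ j, inner ℂ (star (S j) x) (star (S j) x') = inner ℂ x x' := by
  simp_rw [star_eq_adjoint, adjoint_inner_left, ← inner_sum, ← star_eq_adjoint,
    sum_apply_star_apply hS]

end CuntzRelations

section TensorProduct

variable {HL HR H : Type*}
  [NormedAddCommGroup HL] [InnerProductSpace ℂ HL]
  [NormedAddCommGroup HR] [InnerProductSpace ℂ HR]
  [NormedAddCommGroup H] [InnerProductSpace ℂ H]
  {n : Type*} [Fintype n] [DecidableEq n] (ι : HL →ₗ[ℂ] HR →ₗ[ℂ] H)

theorem inner_sum_tmul_sum_tmul [CompleteSpace HR]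
    (hinner : ∀ x x' y y', inner ℂ (ι x y) (ι x' y') = inner ℂ x x' * inner ℂ y y')
    {T : n → HR →L[ℂ] HR} (hT : ∀ i j, star (T i) * T j = if i = j then 1 else 0)
    (A : n → HL →L[ℂ] HL) (x x' : HL) (y y' : HR) :
    inner ℂ (∑ j, ι (A j x) (T j y)) (∑ j, ι (A j x') (T j y')) =
      (∑ j, inner ℂ (A j x) (A j x')) * inner ℂ y y' := by
  simp_rw [sum_inner, inner_sum, hinner, inner_apply_apply_eq_ite hT, mul_ite, mul_zero,
    Finset.sum_ite_eq, Finset.mem_univ, if_true, Finset.sum_mul]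

theorem sum_tmul_star_apply_apply [CompleteSpace HL] {S : n → HL →L[ℂ] HL}
    (hS : ∀ i j, star (S i) * S j = if i = j then 1 else 0)
    (B : n → HR →L[ℂ] HR) (j : n) (x : HL) (z : HR) :
    ∑ k, ι (star (S k) (S j x)) (B k z) = ι x (B j z) := by
  rw [Finset.sum_eq_single j (fun k _ hk => by simp [star_apply_apply_eq_ite hS, hk]) (by simp),
    star_apply_apply_eq_ite hS, if_pos rfl]

end TensorProduct

end

/-- `H` stands for the Hilbert tensor product `HL ⊗ HR`, with `ι x y = x ⊗ y`. -/
theorem stmt1 {HL HR H : Type*}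
    [NormedAddCommGroup HL] [InnerProductSpace ℂ HL] [CompleteSpace HL]
    [NormedAddCommGroup HR] [InnerProductSpace ℂ HR] [CompleteSpace HR]
    [NormedAddCommGroup H] [InnerProductSpace ℂ H] [CompleteSpace H]
    (ι : HL →ₗ[ℂ] HR →ₗ[ℂ] H)
    (hdense : Dense (Submodule.span ℂ {v : H | ∃ x y, ι x y = v} : Set H))
    (hinner : ∀ (x x' : HL) (y y' : HR),
      (inner ℂ (ι x y) (ι x' y') : ℂ) = (inner ℂ x x' : ℂ) * (inner ℂ y y' : ℂ))
    (d : ℕ) (S : Fin d → (HL →L[ℂ] HL)) (T : Fin d → (HR →L[ℂ] HR))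
    (hS1 : ∀ i j, star (S i) * S j = if i = j then 1 else 0)
    (hS2 : ∑ j, S j * star (S j) = 1)
    (hT1 : ∀ i j, star (T i) * T j = if i = j then 1 else 0)
    (hT2 : ∑ j, T j * star (T j) = 1)
    (V : H →L[ℂ] H)
    (hV : ∀ (x : HL) (y : HR), V (ι x y) = ∑ j, ι (star (S j) x) (T j y)) :
    V * star V = 1 ∧ star V * V = 1 := by
  have hisometry : star V * V = 1 := by
    refine ContinuousLinearMap.star_mul_self_eq_one_of_inner_map_map hdense ?_
    rintro _ ⟨x, y, rfl⟩ _ ⟨x', y', rfl⟩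
    rw [hV, hV, inner_sum_tmul_sum_tmul ι hinner hT1, sum_inner_star_apply_star_apply hS2,
      hinner]
  have hrange : {v : H | ∃ x y, ι x y = v} ⊆ Set.range V := by
    rintro _ ⟨x, y, rfl⟩
    refine ⟨∑ j, ι (S j x) (star (T j) y), ?_⟩
    simp_rw [map_sum, hV, sum_tmul_star_apply_apply ι hS1, ← map_sum,
      sum_apply_star_apply hT2]
  exact ⟨ContinuousLinearMap.self_mul_star_eq_one_of_star_mul_self_eq_one hdense hisometry hrange,
    hisometry⟩
end

section
/- Let π be a representation of a C*-algebra A on H, W a unitary on H, and Ω ∈ H a vector cyclic for π(A) and fixed by W (WΩ = Ω). Suppose a bounded operator P commutes with π(A) and with W, and that for every Q ∈ A the weak limit lim_k W^k π(Q) W^{-k} exists and equals φ(Q)·1, where φ is the vector state of Ω. Then PΩ = ⟨Ω, PΩ⟩ Ω, and hence P = ⟨Ω, PΩ⟩ · 1. -/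
/-!
The vector `P Ω` is fixed by `W`, as is `Ω`, so every `W ^ k` and its adjoint fix both and the
matrix element `⟨P Ω, W ^ k π(Q) W⁻ᵏ Ω⟩` does not depend on `k`. The mixing hypothesis then gives
`⟨P Ω, π(Q) Ω⟩ = φ(Q) ⟨P Ω, Ω⟩ = ⟨c Ω, π(Q) Ω⟩` with `c = ⟨Ω, P Ω⟩`, and cyclicity of `Ω` forces
`P Ω = c Ω`. Finally `P π(Q) Ω = π(Q) P Ω = c π(Q) Ω`, so `P` and `c • 1` agree on
vectors whose span is dense.
-/

open Filter Topology
open scoped InnerProductSpace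

section

variable {𝕜 E : Type*} [RCLike 𝕜] [NormedAddCommGroup E] [InnerProductSpace 𝕜 E]

theorem eq_of_forall_inner_left_eq_of_dense_span {s : Set E}
    (hs : Dense (Submodule.span 𝕜 s : Set E)) {x y : E} (h : ∀ v ∈ s, ⟪x, v⟫_𝕜 = ⟪y, v⟫_𝕜) :
    x = y :=
  innerSL_inj.mp <| ContinuousLinearMap.ext_on hs fun v hv => h v hv

section Unitary

variable [CompleteSpace E] {U : E →L[𝕜] E} {x y : E}

theorem star_apply_eq_self_of_mem_unitary (hU : U ∈ unitary (E →L[𝕜] E)) (hx : U x = x) :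
    star U x = x := by
  calc star U x = (star U * U) x := by rw [mul_apply_eq_comp, hx]
    _ = x := by rw [Unitary.star_mul_self_of_mem hU, one_apply_eq_self]

theorem star_pow_apply_eq_self_of_mem_unitary (hU : U ∈ unitary (E →L[𝕜] E)) (hx : U x = x)
    (k : ℕ) : star (U ^ k) x = x := by
  rw [star_pow, pow_apply_eq_iterate]
  exact Function.IsFixedPt.iterate (star_apply_eq_self_of_mem_unitary hU hx) k

theorem inner_conj_apply_eq_of_star_apply_eq_self (T : E →L[𝕜] E) (hx : star U x = x)
    (hy : star U y = y) : ⟪x, (U * T * star U) y⟫_𝕜 = ⟪x, T y⟫_𝕜 := by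
  rw [mul_apply_eq_comp, mul_apply_eq_comp, hy, ← ContinuousLinearMap.adjoint_inner_left,
    ← ContinuousLinearMap.star_eq_adjoint, hx]

theorem inner_apply_eq_of_tendsto_inner_conj_pow (hU : U ∈ unitary (E →L[𝕜] E))
    {T : E →L[𝕜] E} (hx : U x = x) (hy : U y = y) {z : 𝕜}
    (h : Tendsto (fun k : ℕ => ⟪x, (U ^ k * T * star (U ^ k)) y⟫_𝕜) atTop (𝓝 z)) :
    ⟪x, T y⟫_𝕜 = z :=
  tendsto_const_nhds_iff.mp <| h.congr fun k =>
    inner_conj_apply_eq_of_star_apply_eq_self T (star_pow_apply_eq_self_of_mem_unitary hU hx k)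
      (star_pow_apply_eq_self_of_mem_unitary hU hy k)

end Unitary

end

theorem stmt5_general {A H : Type*}
    [NormedRing A] [StarRing A] [NormedAlgebra ℂ A]
    [NormedAddCommGroup H] [InnerProductSpace ℂ H] [CompleteSpace H]
    (π : A →⋆ₐ[ℂ] (H →L[ℂ] H)) (Ω : H)
    (hcyclic : Dense (Submodule.span ℂ (Set.range fun a : A => π a Ω) : Set H))
    (W : H →L[ℂ] H) (hW : W ∈ unitary (H →L[ℂ] H)) (hWΩ : W Ω = Ω)
    (P : H →L[ℂ] H) (hPπ : ∀ a : A, Commute P (π a)) (hPW : Commute P W)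
    (φ : A → ℂ) (hφ : ∀ a : A, φ a = (inner ℂ Ω (π a Ω) : ℂ))
    (hmix : ∀ (Q : A) (x y : H),
      Tendsto (fun k : ℕ => (inner ℂ x ((W ^ k * π Q * star (W ^ k)) y) : ℂ)) atTop
        (nhds (φ Q * (inner ℂ x y : ℂ)))) :
    P Ω = (inner ℂ Ω (P Ω) : ℂ) • Ω ∧ P = (inner ℂ Ω (P Ω) : ℂ) • 1 := by
  set c : ℂ := inner ℂ Ω (P Ω) with hc
  have hWPΩ : W (P Ω) = P Ω := by
    calc W (P Ω) = (P * W) Ω := by rw [hPW.eq, mul_apply_eq_comp]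
      _ = P Ω := by rw [mul_apply_eq_comp, hWΩ]
  have hPΩ : P Ω = c • Ω := by
    refine eq_of_forall_inner_left_eq_of_dense_span hcyclic ?_
    rintro _ ⟨a, rfl⟩
    rw [inner_apply_eq_of_tendsto_inner_conj_pow hW hWPΩ hWΩ (hmix a _ _), hφ, inner_smul_left, hc,
      inner_conj_symm, mul_comm]
  refine ⟨hPΩ, ContinuousLinearMap.ext_on hcyclic ?_⟩
  rintro _ ⟨a, rfl⟩
  calc P (π a Ω) = (π a * P) Ω := by rw [← (hPπ a).eq, mul_apply_eq_comp]
    _ = (c • 1 : H →L[ℂ] H) (π a Ω) := by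
      rw [mul_apply_eq_comp, hPΩ, map_smul, smul_apply, one_apply_eq_self]

/-- Let `π` be a representation of a C*-algebra `A` on `H`, `W` a unitary
fixing a cyclic unit vector `Ω`, and suppose `P` commutes with `π(A)` and `W`, and that
the weak limits `lim_k W^k π(Q) W^{-k} = φ(Q)·1` hold, `φ` being the vector state of `Ω`.
Then `P Ω = ⟨Ω, P Ω⟩ Ω` and `P = ⟨Ω, P Ω⟩ · 1`. -/
theorem stmt5 {A H : Type*}
    [NormedRing A] [StarRing A] [CStarRing A] [NormedAlgebra ℂ A] [CompleteSpace A]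
    [StarModule ℂ A]
    [NormedAddCommGroup H] [InnerProductSpace ℂ H] [CompleteSpace H]
    (π : A →⋆ₐ[ℂ] (H →L[ℂ] H)) (Ω : H) (hΩ : ‖Ω‖ = 1)
    (hcyclic : Dense (Submodule.span ℂ (Set.range fun a : A => π a Ω) : Set H))
    (W : H →L[ℂ] H) (hW : W ∈ unitary (H →L[ℂ] H)) (hWΩ : W Ω = Ω)
    (P : H →L[ℂ] H) (hPπ : ∀ a : A, Commute P (π a)) (hPW : Commute P W)
    (φ : A → ℂ) (hφ : ∀ a : A, φ a = (inner ℂ Ω (π a Ω) : ℂ))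
    (hmix : ∀ (Q : A) (x y : H),
      Tendsto (fun k : ℕ => (inner ℂ x ((W ^ k * π Q * star (W ^ k)) y) : ℂ)) atTop
        (nhds (φ Q * (inner ℂ x y : ℂ)))) :
    P Ω = (inner ℂ Ω (P Ω) : ℂ) • Ω ∧ P = (inner ℂ Ω (P Ω) : ℂ) • 1 :=
  stmt5_general π Ω hcyclic W hW hWΩ P hPπ hPW φ hφ hmix
end

section
/- Let π be a representation of a C*-algebra B on H containing commuting subalgebras π(O_R) and unitaries, let E_R be a projection, Ω a vector with E_R Ω = Ω, and S an operator with PSP and PS both defined where P is a projection with P ≤ E_R and PΩ = Ω. If ⟨Ω, (PSP − PS)(PS* P − S* P) Ω⟩ = 0 and Ω is separating for the relevant reduced algebra, then PSP = PS. In particular, for isometries S_j in a von Neumann algebra N with support projection considerations as in the paper, v_j := P π(S_j) P satisfies ∑_j v_j v_j* = P (the identity of the reduced space). -/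
/-!
Put `T := P S_j P - P S_j`. The hypothesis says `‖T* Ω‖² = ⟪Ω, T T* Ω⟫ = 0`, so `T* Ω = 0`;
as `T*` lies in a set of operators for which `Ω` is separating, `T* = 0`, i.e. `P S_j P = P S_j`.
Then `(P S_j P)(P S_j P)* = P S_j S_j* P`, and the Cuntz relation `∑ S_j S_j* = 1` sums these to `P`.
-/

open ContinuousLinearMap

theorem ContinuousLinearMap.star_apply_eq_zero_of_inner_mul_star_self_eq_zero
    {𝕜 H : Type*} [RCLike 𝕜] [NormedAddCommGroup H] [InnerProductSpace 𝕜 H] [CompleteSpace H]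
    {T : H →L[𝕜] H} {x : H} (h : (inner 𝕜 x ((T * star T) x) : 𝕜) = 0) :
    star T x = 0 := by
  rw [mul_apply_eq_comp, ← adjoint_inner_left, ← star_eq_adjoint] at h
  exact inner_self_eq_zero.mp h

theorem ContinuousLinearMap.eq_of_inner_mul_star_sub_eq_zero
    {𝕜 H : Type*} [RCLike 𝕜] [NormedAddCommGroup H] [InnerProductSpace 𝕜 H] [CompleteSpace H]
    {N : Set (H →L[𝕜] H)} {Ω : H} (hsep : ∀ T ∈ N, T Ω = 0 → T = 0)
    {A B : H →L[𝕜] H} (hmem : star (A - B) ∈ N)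
    (hzero : (inner 𝕜 Ω (((A - B) * star (A - B)) Ω) : 𝕜) = 0) :
    A = B := by
  have h : star (A - B) = 0 :=
    hsep _ hmem (star_apply_eq_zero_of_inner_mul_star_self_eq_zero hzero)
  exact sub_eq_zero.mp (star_eq_zero.mp h)

theorem compression_mul_star_compression {R : Type*} [Semiring R] [StarMul R]
    {P s : R} (hP : star P = P) (hPs : P * s * P = P * s) :
    (P * s * P) * star (P * s * P) = P * (s * star s) * P := by
  rw [hPs, star_mul, hP, mul_assoc, mul_assoc, mul_assoc]

theorem sum_compression_mul_star_compression {R ι : Type*} [Semiring R] [StarMul R]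
    {s : Finset ι} {S : ι → R} (hS : ∑ j ∈ s, S j * star (S j) = 1)
    {P : R} (hP : star P = P) (hPP : P * P = P) (hPS : ∀ j ∈ s, P * S j * P = P * S j) :
    ∑ j ∈ s, (P * S j * P) * star (P * S j * P) = P := by
  calc ∑ j ∈ s, (P * S j * P) * star (P * S j * P)
      = ∑ j ∈ s, P * (S j * star (S j)) * P :=
        Finset.sum_congr rfl fun j hj => compression_mul_star_compression hP (hPS j hj)
    _ = P := by rw [← Finset.sum_mul, ← Finset.mul_sum, hS, mul_one, hPP]

theorem stmt11_general {H : Type*}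
    [NormedAddCommGroup H] [InnerProductSpace ℂ H] [CompleteSpace H]
    (d : ℕ) (S : Fin d → (H →L[ℂ] H))
    (hC2 : ∑ j, S j * star (S j) = 1)
    (P : H →L[ℂ] H) (hPsa : star P = P) (hPidem : P * P = P)
    (Ω : H)
    (N : Set (H →L[ℂ] H))
    (hsep : ∀ T ∈ N, T Ω = 0 → T = 0)
    (hmem : ∀ j, star (P * S j * P - P * S j) ∈ N)
    (hzero : ∀ j, (inner ℂ Ω
        (((P * S j * P - P * S j) * star (P * S j * P - P * S j)) Ω) : ℂ) = 0) :
    (∀ j, P * S j * P = P * S j) ∧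
      ∑ j, (P * S j * P) * star (P * S j * P) = P := by
  have hPS : ∀ j, P * S j * P = P * S j := fun j =>
    eq_of_inner_mul_star_sub_eq_zero hsep (hmem j) (hzero j)
  exact ⟨hPS, sum_compression_mul_star_compression hC2 hPsa hPidem fun j _ => hPS j⟩

/-- Let `S₁,…,S_d` be a Cuntz family on `H`, `P` a projection with
`P Ω = Ω`, and `N` a set of operators for which `Ω` is separating and which contains the
adjoints `(P S_j P − P S_j)*`.  If `⟨Ω, (P S_j P − P S_j)(P S_j* P − S_j* P) Ω⟩ = 0`
for each `j`, then `P S_j P = P S_j`; in particular the compressions `v_j = P S_j P`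
satisfy `∑ j, v_j v_j* = P` (the identity of the reduced space). -/
theorem stmt11 {H : Type*}
    [NormedAddCommGroup H] [InnerProductSpace ℂ H] [CompleteSpace H]
    (d : ℕ) (S : Fin d → (H →L[ℂ] H))
    (hC1 : ∀ i j, star (S i) * S j = if i = j then 1 else 0)
    (hC2 : ∑ j, S j * star (S j) = 1)
    (P : H →L[ℂ] H) (hPsa : star P = P) (hPidem : P * P = P)
    (Ω : H) (hPΩ : P Ω = Ω)
    (N : Set (H →L[ℂ] H))
    (hsep : ∀ T ∈ N, T Ω = 0 → T = 0)
    (hmem : ∀ j, star (P * S j * P - P * S j) ∈ N)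
    (hzero : ∀ j, (inner ℂ Ω
        (((P * S j * P - P * S j) * star (P * S j * P - P * S j)) Ω) : ℂ) = 0) :
    (∀ j, P * S j * P = P * S j) ∧
      ∑ j, (P * S j * P) * star (P * S j * P) = P :=
  stmt11_general d S hC2 P hPsa hPidem Ω N hsep hmem hzero
end

section
/- Let E_R, E_L, E_R', E_L' be projections on a Hilbert space H with E_L' commuting with E_R, and suppose the subspace equality [E_R M_R' Ω] = [E_L M_L' Ω] holds (closed subspaces generated by the reduced commutants applied to Ω), where M_R, M_L are commuting von Neumann algebras, Ω a unit vector, E_R the support projection of the vector state on M_R', E_L that on M_L', and P = E_R E_R' where E_R' projects onto [M_R' Ω]. If the closed span of vectors E_R x y Ω with x ∈ M_R, y ∈ M_L' equals H after applying E_R E_L, then P = E_R E_L. -/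
/-!
Both `E_R E_R'` and `E_L E_L'` are orthogonal projections: `E_R'` projects onto a subspace invariant
under the self-adjoint algebra `M_R'`, hence commutes with `E_R ∈ M_R'`. Their ranges are the
reduced cyclic subspaces `[E_R M_R' Ω] = [E_L M_L' Ω]`, so the two projections coincide. Finally
`E_L E_L'` and `E_R E_L` agree on the total vectors `x y Ω`: since `x y ∈ M_L'`, the projection
`E_L'` fixes `x y Ω`, and `E_R` fixes `E_L x y Ω`, which lies in the common reduced subspace.
-/

open Set

section Projections

variable {H : Type*} [NormedAddCommGroup H] [InnerProductSpace ℂ H]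

/-- Not necessarily an orthogonal projection. -/
def IsProjOnto (E : H →L[ℂ] H) (C : Set H) : Prop :=
  (∀ x ∈ C, E x = x) ∧ ∀ x, E x ∈ C

theorem IsProjOnto.mul_eq_left {E F : H →L[ℂ] H} {C : Set H} (hE : IsProjOnto E C)
    (hF : IsProjOnto F C) : F * E = E := by
  ext v
  exact hF.1 _ (hE.2 v)

theorem IsProjOnto.eq [CompleteSpace H] {E F : H →L[ℂ] H} {C : Set H} (hE : IsProjOnto E C)
    (hF : IsProjOnto F C) (hEsa : IsSelfAdjoint E) (hFsa : IsSelfAdjoint F) : E = F := by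
  have hFE : F * E = E := hE.mul_eq_left hF
  calc E = star (F * E) := by rw [hFE, hEsa.star_eq]
    _ = E * F := by rw [star_mul, hEsa.star_eq, hFsa.star_eq]
    _ = F := hF.mul_eq_left hE

theorem IsProjOnto.mul_mul_eq {E S : H →L[ℂ] H} {C : Set H} (hE : IsProjOnto E C)
    (hS : MapsTo S C C) : E * S * E = S * E := by
  ext v
  exact hE.1 _ (hS (hE.2 v))

theorem IsProjOnto.commute [CompleteSpace H] {E S : H →L[ℂ] H} {C : Set H}
    (hE : IsProjOnto E C) (hEsa : IsSelfAdjoint E) (hS : MapsTo S C C)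
    (hS' : MapsTo ⇑(star S) C C) : Commute E S := by
  have h := congrArg star (hE.mul_mul_eq hS')
  rw [star_mul, star_mul, star_mul, star_star, hEsa.star_eq, ← mul_assoc] at h
  exact h.symm.trans (hE.mul_mul_eq hS)

theorem IsProjOnto.mul_of_mapsTo {E E' : H →L[ℂ] H} {D : Set H}
    (hE' : IsProjOnto E' (closure D)) (hE : E * E = E) (hD : MapsTo E D D) :
    IsProjOnto (E * E') (closure (E '' D)) := by
  refine ⟨fun x hx => ?_, fun x => image_closure_subset_closure_image E.continuous
    ⟨_, hE'.2 x, rfl⟩⟩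
  have hfix : EqOn (E * E') id (E '' D) := by
    rintro _ ⟨d, hd, rfl⟩
    rw [mul_apply_eq_comp, hE'.1 _ (subset_closure (hD hd)), ← mul_apply_eq_comp, hE, id]
  exact hfix.closure (E * E').continuous continuous_id hx

end Projections

section Orbits

variable {H : Type*} [NormedAddCommGroup H] [InnerProductSpace ℂ H]
  {𝒜 : Type*} [SetLike 𝒜 (H →L[ℂ] H)] [MulMemClass 𝒜 (H →L[ℂ] H)] {M : 𝒜}

theorem mapsTo_orbit {S : H →L[ℂ] H} (hS : S ∈ M) (Ω : H) :
    MapsTo S {y | ∃ T ∈ M, T Ω = y} {y | ∃ T ∈ M, T Ω = y} := by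
  rintro _ ⟨T, hT, rfl⟩
  exact ⟨S * T, mul_mem hS hT, rfl⟩

variable [CompleteSpace H] [StarMemClass 𝒜 (H →L[ℂ] H)]

theorem IsProjOnto.commute_of_mem {Ω : H} {E S : H →L[ℂ] H}
    (hE : IsProjOnto E (closure {y | ∃ T ∈ M, T Ω = y})) (hEsa : IsSelfAdjoint E) (hS : S ∈ M) :
    Commute E S :=
  hE.commute hEsa ((mapsTo_orbit hS Ω).closure S.continuous)
    ((mapsTo_orbit (star_mem hS) Ω).closure (star S).continuous)

theorem IsProjOnto.mul_left_of_mem {Ω : H} {E E' : H →L[ℂ] H} (hEmem : E ∈ M)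
    (hEsa : IsSelfAdjoint E) (hEidem : E * E = E)
    (hE' : IsProjOnto E' (closure {y | ∃ T ∈ M, T Ω = y})) (hE'sa : IsSelfAdjoint E') :
    IsProjOnto (E * E') (closure {y | ∃ T ∈ M, E (T Ω) = y}) ∧ IsSelfAdjoint (E * E') := by
  have himage : E '' {y | ∃ T ∈ M, T Ω = y} = {y | ∃ T ∈ M, E (T Ω) = y} := by
    ext; simp
  refine ⟨himage ▸ hE'.mul_of_mapsTo hEidem (mapsTo_orbit hEmem Ω), ?_⟩
  exact (hEsa.commute_iff hE'sa).1 (hE'.commute_of_mem hE'sa hEmem).symm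

end Orbits

theorem stmt15_general {H : Type*}
    [NormedAddCommGroup H] [InnerProductSpace ℂ H] [CompleteSpace H]
    (MR ML : VonNeumannAlgebra H)
    (hcomm : ∀ x ∈ (MR : Set (H →L[ℂ] H)), ∀ y ∈ (ML : Set (H →L[ℂ] H)), x * y = y * x)
    (Ω : H)
    (ER EL ER' EL' P : H →L[ℂ] H)
    (hERsa : star ER = ER) (hERidem : ER * ER = ER)
    (hELsa : star EL = EL) (hELidem : EL * EL = EL)
    (hER'sa : star ER' = ER')
    (hEL'sa : star EL' = EL')
    (hERmem : ER ∈ MR.commutant)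
    (hELmem : EL ∈ ML.commutant)
    (hER' : (∀ x ∈ closure {y : H | ∃ T ∈ (MR.commutant : Set (H →L[ℂ] H)), T Ω = y},
        ER' x = x) ∧
      ∀ x : H, ER' x ∈ closure {y : H | ∃ T ∈ (MR.commutant : Set (H →L[ℂ] H)), T Ω = y})
    (hEL' : (∀ x ∈ closure {y : H | ∃ T ∈ (ML.commutant : Set (H →L[ℂ] H)), T Ω = y},
        EL' x = x) ∧
      ∀ x : H, EL' x ∈ closure {y : H | ∃ T ∈ (ML.commutant : Set (H →L[ℂ] H)), T Ω = y})
    (hP : P = ER * ER')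
    (hsub : closure {y : H | ∃ T ∈ (MR.commutant : Set (H →L[ℂ] H)), ER (T Ω) = y} =
      closure {y : H | ∃ T ∈ (ML.commutant : Set (H →L[ℂ] H)), EL (T Ω) = y})
    (htotal : Dense {w : H | ∃ x ∈ (MR : Set (H →L[ℂ] H)),
      ∃ y ∈ (ML.commutant : Set (H →L[ℂ] H)), (x * y) Ω = w}) :
    P = ER * EL := by
  obtain ⟨hR, hRsa⟩ :=
    IsProjOnto.mul_left_of_mem (M := MR.commutant) hERmem hERsa hERidem hER' hER'sa
  obtain ⟨hL, hLsa⟩ :=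
    IsProjOnto.mul_left_of_mem (M := ML.commutant) hELmem hELsa hELidem hEL' hEL'sa
  have hRL : ER * ER' = EL * EL' := hR.eq (hsub ▸ hL) hRsa hLsa
  have hERfix : EqOn ER id (closure {y | ∃ T ∈ MR.commutant, ER (T Ω) = y}) := by
    refine EqOn.closure ?_ ER.continuous continuous_id
    rintro _ ⟨T, -, rfl⟩
    rw [id, ← mul_apply_eq_comp, hERidem]
  have hLR : EL * EL' = ER * EL := by
    refine DFunLike.coe_injective <|
      Continuous.ext_on htotal (EL * EL').continuous (ER * EL).continuous ?_
    rintro _ ⟨x, hx, y, hy, rfl⟩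
    have hxy : x * y ∈ ML.commutant :=
      mul_mem ((VonNeumannAlgebra.mem_commutant_iff).2 fun z hz => (hcomm x hx z hz).symm) hy
    have hEL'fix : EL' ((x * y) Ω) = (x * y) Ω := hEL'.1 _ (subset_closure ⟨_, hxy, rfl⟩)
    have hERfix' : ER (EL ((x * y) Ω)) = EL ((x * y) Ω) :=
      hERfix (hsub ▸ subset_closure ⟨_, hxy, rfl⟩)
    exact (congrArg EL hEL'fix).trans hERfix'.symm
  rw [hP, hRL, hLR]

/-- Let `M_R`, `M_L` be mutually commuting von Neumann algebras on `H`
with a unit vector `Ω`; let `E_R` (resp. `E_L`) be the support projection of the vector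
state on `M_R'` (resp. `M_L'`), i.e. the smallest projection there fixing `Ω`; let
`E_R'` (resp. `E_L'`) be the projection onto the closure of `M_R' Ω` (resp. `M_L' Ω`),
and `P = E_R E_R'`.  Assume `E_L'` commutes with `E_R`, the equality of reduced cyclic
subspaces `[E_R M_R' Ω] = [E_L M_L' Ω]`, and totality of the vectors `x y Ω`
(`x ∈ M_R`, `y ∈ M_L'`).  Then `P = E_R E_L`. -/
theorem stmt15 {H : Type*}
    [NormedAddCommGroup H] [InnerProductSpace ℂ H] [CompleteSpace H]
    (MR ML : VonNeumannAlgebra H)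
    (hcomm : ∀ x ∈ (MR : Set (H →L[ℂ] H)), ∀ y ∈ (ML : Set (H →L[ℂ] H)), x * y = y * x)
    (Ω : H) (hΩ : ‖Ω‖ = 1)
    (ER EL ER' EL' P : H →L[ℂ] H)
    (hERsa : star ER = ER) (hERidem : ER * ER = ER)
    (hELsa : star EL = EL) (hELidem : EL * EL = EL)
    (hER'sa : star ER' = ER') (hER'idem : ER' * ER' = ER')
    (hEL'sa : star EL' = EL') (hEL'idem : EL' * EL' = EL')
    (hERmem : ER ∈ MR.commutant) (hERΩ : ER Ω = Ω)
    (hERmin : ∀ q ∈ MR.commutant, star q = q → q * q = q → q Ω = Ω → ER * q = ER)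
    (hELmem : EL ∈ ML.commutant) (hELΩ : EL Ω = Ω)
    (hELmin : ∀ q ∈ ML.commutant, star q = q → q * q = q → q Ω = Ω → EL * q = EL)
    (hER' : (∀ x ∈ closure {y : H | ∃ T ∈ (MR.commutant : Set (H →L[ℂ] H)), T Ω = y},
        ER' x = x) ∧
      ∀ x : H, ER' x ∈ closure {y : H | ∃ T ∈ (MR.commutant : Set (H →L[ℂ] H)), T Ω = y})
    (hEL' : (∀ x ∈ closure {y : H | ∃ T ∈ (ML.commutant : Set (H →L[ℂ] H)), T Ω = y},
        EL' x = x) ∧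
      ∀ x : H, EL' x ∈ closure {y : H | ∃ T ∈ (ML.commutant : Set (H →L[ℂ] H)), T Ω = y})
    (hcommLR : Commute EL' ER)
    (hP : P = ER * ER')
    (hsub : closure {y : H | ∃ T ∈ (MR.commutant : Set (H →L[ℂ] H)), ER (T Ω) = y} =
      closure {y : H | ∃ T ∈ (ML.commutant : Set (H →L[ℂ] H)), EL (T Ω) = y})
    (htotal : Dense {w : H | ∃ x ∈ (MR : Set (H →L[ℂ] H)),
      ∃ y ∈ (ML.commutant : Set (H →L[ℂ] H)), (x * y) Ω = w}) :
    P = ER * EL :=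
  stmt15_general MR ML hcomm Ω ER EL ER' EL' P hERsa hERidem hELsa hELidem hER'sa hEL'sa hERmem
    hELmem hER' hEL' hP hsub htotal
end
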